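/- Let f : G → G' be a homomorphism of finite groups and → a G-transfer system. Then f_L(→), the transfer system generated by the image pairs, equals the reflexive-transitive closure of the relation ⋃_{K → H} { (g f(K) g⁻¹, g f(H) g⁻¹) : g ∈ G' } on Sub(G'). -/

import Mathlib

/-- Conjugation of a subgroup: `gKg⁻¹`. -/
def conjSub {G : Type*} [Group G] (g : G) (K : Subgroup G) : Subgroup G :=
  Subgroup.map (MulAut.conj g).toMonoidHom K

/-- A `G`-transfer system: a partial order on subgroups refining inclusion,
closed under conjugation and restriction. -/
def IsTransferSystem {G : Type*} [Group G] (R : Subgroup G → Subgroup G → Prop) : Prop :=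
  (∀ H, R H H) ∧
  (∀ ⦃K H⦄, R K H → R H K → K = H) ∧
  (∀ ⦃K J H⦄, R K J → R J H → R K H) ∧
  (∀ ⦃K H⦄, R K H → K ≤ H) ∧
  (∀ ⦃K H⦄ (g : G), R K H → R (conjSub g K) (conjSub g H)) ∧
  (∀ ⦃K H⦄, R K H → ∀ ⦃L⦄, L ≤ H → R (L ⊓ K) L)

/-- `TL` is the transfer system generated by the relation `R`:
the least transfer system containing `R`. -/
def IsGenBy {G : Type*} [Group G] (TL R : Subgroup G → Subgroup G → Prop) : Prop :=
  IsTransferSystem TL ∧ (∀ K H, R K H → TL K H) ∧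
    ∀ T, IsTransferSystem T → (∀ K H, R K H → T K H) → ∀ K H, TL K H → T K H

/-!
The conjugates of image pairs, `(g f(K) g⁻¹, g f(H) g⁻¹)` for `K → H`, already form a relation
that refines inclusion and is closed under conjugation and restriction. Restriction is the only
point needing an idea: restricting such a pair to `L ≤ g f(H) g⁻¹` is the conjugated image of the
restriction of `K → H` to `M = f⁻¹(g⁻¹ L g) ∩ H`, because `f(f⁻¹(X) ∩ K) = X ∩ f(K)`. These closure
properties pass to the reflexive-transitive closure, which is therefore a transfer system; it
contains the image pairs and lies in every transfer system containing them.
-/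

open Relation

section ConjSub

variable {G : Type*} [Group G]

lemma conjSub_one (K : Subgroup G) : conjSub (1 : G) K = K := by
  simp only [conjSub, map_one]
  exact Subgroup.map_id K

lemma conjSub_mul (g h : G) (K : Subgroup G) :
    conjSub (g * h) K = conjSub g (conjSub h K) := by
  unfold conjSub
  rw [Subgroup.map_map]
  congr 1
  ext x
  simp [mul_assoc]

lemma conjSub_inv_conjSub (g : G) (K : Subgroup G) : conjSub g⁻¹ (conjSub g K) = K := by
  rw [← conjSub_mul, inv_mul_cancel, conjSub_one]

lemma conjSub_conjSub_inv (g : G) (K : Subgroup G) : conjSub g (conjSub g⁻¹ K) = K := by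
  rw [← conjSub_mul, mul_inv_cancel, conjSub_one]

lemma conjSub_mono (g : G) {A B : Subgroup G} (h : A ≤ B) : conjSub g A ≤ conjSub g B :=
  Subgroup.map_mono h

lemma conjSub_inf (g : G) (A B : Subgroup G) :
    conjSub g (A ⊓ B) = conjSub g A ⊓ conjSub g B :=
  Subgroup.map_inf A B _ (MulAut.conj g).injective

end ConjSub

lemma Subgroup.map_comap_inf {G G' : Type*} [Group G] [Group G'] (f : G →* G')
    (L : Subgroup G') (K : Subgroup G) : (L.comap f ⊓ K).map f = L ⊓ K.map f :=
  SetLike.coe_injective (Set.image_preimage_inter f (K : Set G) (L : Set G'))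

namespace IsTransferSystem

variable {G : Type*} [Group G] {T : Subgroup G → Subgroup G → Prop}

lemma refl (hT : IsTransferSystem T) (H : Subgroup G) : T H H := hT.1 H

lemma trans (hT : IsTransferSystem T) {K J H : Subgroup G} (hKJ : T K J) (hJH : T J H) :
    T K H :=
  hT.2.2.1 hKJ hJH

lemma le (hT : IsTransferSystem T) {K H : Subgroup G} (h : T K H) : K ≤ H := hT.2.2.2.1 h

lemma conj (hT : IsTransferSystem T) {K H : Subgroup G} (g : G) (h : T K H) :
    T (conjSub g K) (conjSub g H) :=
  hT.2.2.2.2.1 g h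

lemma restrict (hT : IsTransferSystem T) {K H : Subgroup G} (h : T K H) {L : Subgroup G}
    (hL : L ≤ H) : T (L ⊓ K) L :=
  hT.2.2.2.2.2 h hL

lemma reflTransGen_imp (hT : IsTransferSystem T) {r : Subgroup G → Subgroup G → Prop}
    (hrT : ∀ ⦃A B⦄, r A B → T A B) {A B : Subgroup G} (h : ReflTransGen r A B) : T A B := by
  induction h with
  | refl => exact hT.refl _
  | tail _ hstep ih => exact hT.trans ih (hrT hstep)

end IsTransferSystem

section ReflTransGen

variable {G : Type*} [Group G] {r : Subgroup G → Subgroup G → Prop}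

lemma le_of_reflTransGen (hle : ∀ ⦃A B⦄, r A B → A ≤ B) {A B : Subgroup G}
    (h : ReflTransGen r A B) : A ≤ B := by
  induction h with
  | refl => exact le_rfl
  | tail _ hstep ih => exact ih.trans (hle hstep)

lemma reflTransGen_conjSub (hconj : ∀ ⦃A B⦄ (g : G), r A B → r (conjSub g A) (conjSub g B))
    (g : G) {A B : Subgroup G} (h : ReflTransGen r A B) :
    ReflTransGen r (conjSub g A) (conjSub g B) :=
  ReflTransGen.lift (conjSub g) (fun _ _ hab => hconj g hab) _ _ h

lemma reflTransGen_restrict (hle : ∀ ⦃A B⦄, r A B → A ≤ B)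
    (hres : ∀ ⦃A B⦄, r A B → ∀ ⦃L⦄, L ≤ B → r (L ⊓ A) L) {A B : Subgroup G}
    (h : ReflTransGen r A B) {L : Subgroup G} (hL : L ≤ B) : ReflTransGen r (L ⊓ A) L := by
  induction h generalizing L with
  | refl => rw [inf_eq_left.mpr hL]
  | @tail J B hAJ hJB ih =>
    have hLJ : ReflTransGen r (L ⊓ J ⊓ A) (L ⊓ J) := ih inf_le_right
    rw [inf_assoc, inf_eq_right.mpr (le_of_reflTransGen hle hAJ)] at hLJ
    exact hLJ.tail (hres hJB hL)

lemma isTransferSystem_reflTransGen (hle : ∀ ⦃A B⦄, r A B → A ≤ B)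
    (hconj : ∀ ⦃A B⦄ (g : G), r A B → r (conjSub g A) (conjSub g B))
    (hres : ∀ ⦃A B⦄, r A B → ∀ ⦃L⦄, L ≤ B → r (L ⊓ A) L) :
    IsTransferSystem (ReflTransGen r) :=
  ⟨fun _ => .refl, fun _ _ hKH hHK => (le_of_reflTransGen hle hKH).antisymm
    (le_of_reflTransGen hle hHK), fun _ _ _ => .trans, fun _ _ => le_of_reflTransGen hle,
    fun _ _ g => reflTransGen_conjSub hconj g, fun _ _ => reflTransGen_restrict hle hres⟩

end ReflTransGen

lemma IsGenBy.iff_of_le {G : Type*} [Group G] {TL R S : Subgroup G → Subgroup G → Prop}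
    (hTL : IsGenBy TL R) (hS : IsTransferSystem S) (hRS : ∀ A B, R A B → S A B)
    (hSTL : ∀ A B, S A B → TL A B) (A B : Subgroup G) : TL A B ↔ S A B :=
  ⟨hTL.2.2 S hS hRS A B, hSTL A B⟩

section ConjImageRel

variable {G G' : Type*} [Group G] [Group G'] (f : G →* G') {T : Subgroup G → Subgroup G → Prop}

def conjImageRel (T : Subgroup G → Subgroup G → Prop) (A B : Subgroup G') : Prop :=
  ∃ (K H : Subgroup G) (g : G'), T K H ∧ A = conjSub g (K.map f) ∧ B = conjSub g (H.map f)

lemma conjImageRel_map {K H : Subgroup G} (h : T K H) : conjImageRel f T (K.map f) (H.map f) :=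
  ⟨K, H, 1, h, (conjSub_one _).symm, (conjSub_one _).symm⟩

lemma IsTransferSystem.conjImageRel_imp {T' : Subgroup G' → Subgroup G' → Prop}
    (hT' : IsTransferSystem T') (hmap : ∀ ⦃K H⦄, T K H → T' (K.map f) (H.map f))
    {A B : Subgroup G'} (h : conjImageRel f T A B) : T' A B := by
  obtain ⟨K, H, g, hKH, rfl, rfl⟩ := h
  exact hT'.conj g (hmap hKH)

variable {f}

lemma conjImageRel_le (hT : IsTransferSystem T) {A B : Subgroup G'}
    (h : conjImageRel f T A B) : A ≤ B := by
  obtain ⟨K, H, g, hKH, rfl, rfl⟩ := h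
  exact conjSub_mono g (Subgroup.map_mono (hT.le hKH))

lemma conjImageRel_conjSub {A B : Subgroup G'} (g : G') (h : conjImageRel f T A B) :
    conjImageRel f T (conjSub g A) (conjSub g B) := by
  obtain ⟨K, H, g₀, hKH, rfl, rfl⟩ := h
  exact ⟨K, H, g * g₀, hKH, (conjSub_mul g g₀ _).symm, (conjSub_mul g g₀ _).symm⟩

lemma conjImageRel_restrict (hT : IsTransferSystem T) {A B : Subgroup G'}
    (h : conjImageRel f T A B) {L : Subgroup G'} (hL : L ≤ B) :
    conjImageRel f T (L ⊓ A) L := by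
  obtain ⟨K, H, g, hKH, rfl, rfl⟩ := h
  set L' := conjSub g⁻¹ L
  have hL' : L' ≤ H.map f := by simpa only [conjSub_inv_conjSub] using conjSub_mono g⁻¹ hL
  have hMK : L'.comap f ⊓ H ⊓ K = L'.comap f ⊓ K := by
    rw [inf_assoc, inf_eq_right.mpr (hT.le hKH)]
  refine ⟨L'.comap f ⊓ H ⊓ K, L'.comap f ⊓ H, g, hT.restrict hKH inf_le_right, ?_, ?_⟩
  · rw [hMK, Subgroup.map_comap_inf, conjSub_inf, conjSub_conjSub_inv]
  · rw [Subgroup.map_comap_inf, inf_eq_left.mpr hL', conjSub_conjSub_inv]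

end ConjImageRel

theorem stmt17_general {G G' : Type*} [Group G] [Group G']
    (f : G →* G')
    (T : Subgroup G → Subgroup G → Prop) (hT : IsTransferSystem T)
    (TL : Subgroup G' → Subgroup G' → Prop)
    (hTL : IsGenBy TL (fun A B => ∃ K H : Subgroup G, T K H ∧ A = K.map f ∧ B = H.map f)) :
    ∀ A B, TL A B ↔ Relation.ReflTransGen
      (fun A B => ∃ (K H : Subgroup G) (g : G'), T K H ∧
        A = conjSub g (K.map f) ∧ B = conjSub g (H.map f)) A B := by
  have hclosure : IsTransferSystem (ReflTransGen (conjImageRel f T)) :=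
    isTransferSystem_reflTransGen (fun _ _ => conjImageRel_le hT)
      (fun _ _ => conjImageRel_conjSub) (fun _ _ h _ => conjImageRel_restrict hT h)
  refine hTL.iff_of_le hclosure ?_ ?_
  · rintro _ _ ⟨K, H, hKH, rfl, rfl⟩
    exact .single (conjImageRel_map f hKH)
  · intro A B h
    refine hTL.1.reflTransGen_imp (fun _ _ => hTL.1.conjImageRel_imp f ?_) h
    exact fun K H hKH => hTL.2.1 _ _ ⟨K, H, hKH, rfl, rfl⟩

theorem stmt17 {G G' : Type*} [Group G] [Group G'] [Finite G] [Finite G']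
    (f : G →* G')
    (T : Subgroup G → Subgroup G → Prop) (hT : IsTransferSystem T)
    (TL : Subgroup G' → Subgroup G' → Prop)
    (hTL : IsGenBy TL (fun A B => ∃ K H : Subgroup G, T K H ∧ A = K.map f ∧ B = H.map f)) :
    ∀ A B, TL A B ↔ Relation.ReflTransGen
      (fun A B => ∃ (K H : Subgroup G) (g : G'), T K H ∧
        A = conjSub g (K.map f) ∧ B = conjSub g (H.map f)) A B :=
  stmt17_general f T hT TL hTL
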